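/- arXiv:1901.02363 — 2 statements merged into one kernel-verified Lean document; each statement's English description precedes it below -/
import Mathlib

section
/- Assume each F_k (k = 1,…,K) is nonempty, let f_i : ℕ → ℝ (i = 1,…,n) be arbitrary functions, let N_i^C ∈ ℕ be capacities, and assume the set B = {N ∈ F_1 + ⋯ + F_K : N_i ≤ N_i^C for all i} is nonempty. Define the optimistic bilevel value V = sup { ∑_{i=1}^n f_i(∑_{k=1}^K u_k(i)) : y ∈ ℝ^n, u_k ∈ F_k maximizes v ↦ ⟨ρ_k + y, v⟩ over F_k for each k, and ∑_{k=1}^K u_k(i) ≤ N_i^C for all i }. Then V = max_{N ∈ B} ∑_{i=1}^n f_i(N_i), and both the supremum and the maximum are attained. -/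
/-!
Fix `N ∈ B` maximizing `∑ᵢ fᵢ(Nᵢ)` and, among the decompositions `N = ∑ₖ uₖ` with `uₖ ∈ Fₖ`,
one maximizing the total preference `∑ₖ ⟨ρₖ, uₖ⟩`. On the items, draw an edge `i → j` of weight
`ρₖ(i) - ρₖ(j)` whenever customer `k` could swap its item `i` for the item `j`. Letting every
customer move along a cycle of this graph yields another decomposition of `N`, so by maximality
there is no negative cycle, and shortest-path distances give prices `y` with
`y j ≤ y i + ρₖ(i) - ρₖ(j)` along every edge. At these prices no customer gains from a single
swap, which for a cardinality constraint means that `uₖ` is a best response. Conversely, every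
best-response profile within the capacities yields a point of `B`.
-/

open Finset

section Potential

variable {α : Type*} (w : α → α → ℝ)

def walkCost : List α → ℝ
  | [] => 0
  | [_] => 0
  | a :: b :: l => w a b + walkCost (b :: l)

theorem walkCost_append_cons (s : List α) (j : α) (t : List α) :
    walkCost w (s ++ j :: t) = walkCost w (s ++ [j]) + walkCost w (j :: t) := by
  induction s with
  | nil => simp [walkCost]
  | cons a s ih => cases s <;> simp_all [walkCost, add_assoc]

theorem walkCost_concat {l : List α} {i : α} (h : l.getLast? = some i) (j : α) :
    walkCost w (l ++ [j]) = walkCost w l + w i j := by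
  obtain ⟨s, rfl⟩ := List.getLast?_eq_some_iff.mp h
  rw [List.append_assoc, List.singleton_append, walkCost_append_cons]
  simp [walkCost]

theorem walkCost_cons_append_singleton (x y : α) (l : List α) :
    walkCost w (x :: l ++ [y]) = ∑ s : Fin (l.length + 1), w (x :: l)[s] (l ++ [y])[s] := by
  induction l generalizing x with
  | nil => simp [walkCost]
  | cons b l ih =>
    have := ih b
    simp only [List.cons_append] at this
    simp [Fin.sum_univ_succ, walkCost, this]

theorem List.getElem_cons_finRotate (x : α) (l : List α) (s : Fin (l.length + 1)) :
    (x :: l)[finRotate _ s] = (l ++ [x])[s] := by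
  by_cases h : s = Fin.last _
  · subst h; simp
  · simp [Fin.val_add_one, h, List.getElem_append_left (Fin.val_lt_last h)]

variable {w} in
theorem walkCost_closed_nonneg {E : α → α → Prop}
    (hcyc : ∀ (m : ℕ) (a : Fin m → α), a.Injective → (∀ t, E (a t) (a (finRotate m t))) →
      0 ≤ ∑ t, w (a t) (a (finRotate m t)))
    {x : α} {l : List α} (hnd : (x :: l).Nodup) (hch : (x :: l ++ [x]).IsChain E) :
    0 ≤ walkCost w (x :: l ++ [x]) := by
  have hedge := List.forall₂_iff_get.mp (List.isChain_cons_append_singleton_iff_forall₂.mp hch)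
  have := hcyc _ (fun s : Fin (l.length + 1) => (x :: l)[s]) (List.nodup_iff_injective_get.mp hnd)
    fun s => by
      rw [List.getElem_cons_finRotate]
      simpa only [List.get_eq_getElem, Fin.getElem_fin] using hedge.2 s s.2 (by simp; omega)
  simpa only [List.getElem_cons_finRotate, walkCost_cons_append_singleton] using this

theorem exists_potential_of_forall_cycle_nonneg [Fintype α] (E : α → α → Prop)
    (hcyc : ∀ (m : ℕ) (a : Fin m → α), a.Injective → (∀ t, E (a t) (a (finRotate m t))) →
      0 ≤ ∑ t, w (a t) (a (finRotate m t))) :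
    ∃ y : α → ℝ, ∀ i j, E i j → y j ≤ y i + w i j := by
  set paths : α → Set (List α) := fun j => {l | l.Nodup ∧ l.IsChain E ∧ l.getLast? = some j}
  have hfin : ∀ j, (walkCost w '' paths j).Finite := fun j =>
    ((List.finite_length_le α (Fintype.card α)).subset fun l hl => hl.1.length_le_card).image _
  have hle : ∀ {j l}, l ∈ paths j → sInf (walkCost w '' paths j) ≤ walkCost w l :=
    fun hl => csInf_le (hfin _).bddBelow (Set.mem_image_of_mem _ hl)
  refine ⟨fun j => sInf (walkCost w '' paths j), fun i j hij => ?_⟩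
  have hne : (walkCost w '' paths i).Nonempty :=
    ⟨_, Set.mem_image_of_mem (walkCost w) (show [i] ∈ paths i from ⟨by simp, by simp, rfl⟩)⟩
  obtain ⟨l, ⟨hnd, hch, hlast⟩, hl⟩ := hne.csInf_mem (hfin i)
  simp only [← hl]
  by_cases hj : j ∈ l
  · obtain ⟨s, t, rfl⟩ := List.append_of_mem hj
    rw [List.isChain_split] at hch
    have hlast' : (j :: t).getLast? = some i := by
      rwa [List.getLast?_append_of_ne_nil _ (List.cons_ne_nil _ _)] at hlast
    have hcycle := walkCost_closed_nonneg hcyc (hnd.sublist (List.sublist_append_right _ _))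
      (hch.2.append (List.isChain_singleton j) (by simpa [hlast'] using hij))
    rw [List.cons_append, ← List.cons_append, walkCost_concat w hlast'] at hcycle
    have hprefix := hle (j := j)
      ⟨hnd.sublist ((List.nil_sublist t).cons_cons j |>.append_left s), hch.1, by simp⟩
    rw [walkCost_append_cons]
    linarith
  · have hext := hle (j := j) ⟨by simpa using hnd.concat hj,
      hch.append (List.isChain_singleton j) (by simpa [hlast] using hij), by simp⟩
    rwa [walkCost_concat w hlast] at hext

end Potential

section Choice

variable {α : Type*} [Fintype α]

def IsChoice (R : ℕ) (J : Set α) (u : α → ℕ) : Prop :=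
  (∀ i, u i ≤ 1) ∧ ∑ i, u i = R ∧ ∀ i ∈ J, u i = 0

theorem IsChoice.sum_mul_le {R : ℕ} {J : Set α} {u v : α → ℕ} (hu : IsChoice R J u)
    (hv : IsChoice R J v) (c : α → ℝ) (h : ∀ i j, u i = 1 → u j = 0 → j ∉ J → c j ≤ c i) :
    ∑ i, c i * v i ≤ ∑ i, c i * u i := by
  classical
  -- Since `∑ u = ∑ v`, `∑ c (u - v) = ∑ (c - θ) (u - v)`, and a threshold makes each term `≥ 0`.
  obtain ⟨θ, hlow, hup⟩ : ∃ θ, (∀ j, u j = 0 → j ∉ J → c j ≤ θ) ∧ ∀ i, u i = 1 → θ ≤ c i := by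
    by_cases hs : ∃ i, u i = 1
    · obtain ⟨i₀, hi₀, hmin⟩ :=
        exists_min_image {i | u i = 1} c (by simpa [Finset.Nonempty] using hs)
      simp only [mem_filter, mem_univ, true_and] at hi₀ hmin
      exact ⟨c i₀, fun j hj hJ => h i₀ j hi₀ hj hJ, hmin⟩
    · obtain ⟨θ, hθ⟩ := (Set.finite_range c).bddAbove
      exact ⟨θ, fun j _ _ => hθ ⟨j, rfl⟩, fun i hi => (hs ⟨i, hi⟩).elim⟩
  have hsum : ∑ i, (v i : ℝ) = ∑ i, (u i : ℝ) := by exact_mod_cast hv.2.1.trans hu.2.1.symm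
  have hterm : ∀ i, 0 ≤ (c i - θ) * (u i - v i) := by
    intro i
    rcases Nat.le_one_iff_eq_zero_or_eq_one.mp (hu.1 i) with hui | hui
    · rcases Nat.le_one_iff_eq_zero_or_eq_one.mp (hv.1 i) with hvi | hvi
      · simp [hui, hvi]
      · have := hlow i hui fun hJ => absurd (hv.2.2 i hJ) (by omega)
        simp only [hui, hvi]; push_cast; nlinarith
    · have := hup i hui
      have : (v i : ℝ) ≤ 1 := by exact_mod_cast hv.1 i
      simp only [hui]; push_cast; nlinarith
  have := sum_nonneg fun i (_ : i ∈ univ) => hterm i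
  simp only [mul_sub, sub_mul, sum_sub_distrib, ← mul_sum, hsum] at this
  linarith

end Choice

section MoveCount

variable {ι κ α : Type*} [Fintype ι] [DecidableEq κ] [DecidableEq α] (k : ι → κ) (a : ι → α)

def moveCount (c : κ) (i : α) : ℕ := #{t | k t = c ∧ a t = i}

theorem moveCount_le_one {a : ι → α} (ha : a.Injective) (c : κ) (i : α) : moveCount k a c i ≤ 1 :=
  card_le_one.mpr fun t ht t' ht' => ha <| by simp_all

theorem moveCount_pos {c : κ} {i : α} : 0 < moveCount k a c i ↔ ∃ t, k t = c ∧ a t = i := by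
  simp [moveCount, card_pos, filter_nonempty_iff]

theorem sum_moveCount_left [Fintype α] (c : κ) : ∑ i, moveCount k a c i = #{t | k t = c} := by
  simp only [moveCount, card_eq_sum_ones, sum_filter]
  rw [sum_comm]
  simp [ite_and]

theorem sum_moveCount_right [Fintype κ] (i : α) : ∑ c, moveCount k a c i = #{t | a t = i} := by
  simp only [moveCount, card_eq_sum_ones, sum_filter]
  rw [sum_comm]
  simp [ite_and]

theorem sum_sum_mul_moveCount [Fintype α] [Fintype κ] (g : κ → α → ℝ) :
    ∑ c, ∑ i, g c i * moveCount k a c i = ∑ t, g (k t) (a t) := by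
  simp only [moveCount, card_filter, Nat.cast_sum, Nat.cast_ite, Nat.cast_one, Nat.cast_zero,
    mul_sum, mul_ite, mul_one, mul_zero]
  rw [sum_congr rfl fun c _ => sum_comm, sum_comm]
  simp [ite_and]

end MoveCount

section Exchange

variable {ι κ α : Type*}

def IsMove (J : κ → Set α) (u : κ → α → ℕ) (c : κ) (i j : α) : Prop :=
  u c i = 1 ∧ u c j = 0 ∧ j ∉ J c

def profit [Fintype κ] [Fintype α] (ρ : κ → α → ℝ) (u : κ → α → ℕ) : ℝ :=
  ∑ c, ∑ i, ρ c i * u c i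

def decompositions [Fintype κ] [Fintype α] (R : κ → ℕ) (J : κ → Set α) (N : α → ℕ) :
    Set (κ → α → ℕ) :=
  {u | (∀ c, IsChoice (R c) (J c) (u c)) ∧ ∑ c, u c = N}

variable [Fintype ι] [DecidableEq κ] [DecidableEq α]

-- Customer `k t` gives up `a t` and takes `a (σ t)`; under `IsMove` the subtraction is exact.
def exchange (u : κ → α → ℕ) (k : ι → κ) (a : ι → α) (σ : Equiv.Perm ι) (c : κ) (i : α) : ℕ :=
  u c i + moveCount k (a ∘ σ) c i - moveCount k a c i

variable {J : κ → Set α} {u : κ → α → ℕ} {k : ι → κ} {a : ι → α} {σ : Equiv.Perm ι}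

theorem cast_exchange {R : Type*} [AddGroupWithOne R] (ha : a.Injective)
    (hmove : ∀ t, IsMove J u (k t) (a t) (a (σ t))) (c : κ) (i : α) :
    (exchange u k a σ c i : R) = u c i + moveCount k (a ∘ σ) c i - moveCount k a c i := by
  have hle : moveCount k a c i ≤ u c i := by
    rcases (moveCount_le_one k ha c i).eq_or_lt with h | h
    · obtain ⟨t, rfl, rfl⟩ := (moveCount_pos k a).mp (h ▸ Nat.one_pos)
      exact h.le.trans (hmove t).1.ge
    · omega
  rw [exchange, Nat.cast_sub (hle.trans (Nat.le_add_right _ _)), Nat.cast_add]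

theorem isChoice_exchange [Fintype α] {R : κ → ℕ} (hu : ∀ c, IsChoice (R c) (J c) (u c))
    (ha : a.Injective) (hmove : ∀ t, IsMove J u (k t) (a t) (a (σ t))) (c : κ) :
    IsChoice (R c) (J c) (exchange u k a σ c) := by
  have hin : ∀ i, 0 < moveCount k (a ∘ σ) c i → u c i = 0 ∧ i ∉ J c := by
    intro i h
    obtain ⟨t, rfl, rfl⟩ := (moveCount_pos k _).mp h
    exact (hmove t).2
  refine ⟨fun i => ?_, ?_, fun i hi => ?_⟩
  · have := hin i
    have := (hu c).1 i
    have := moveCount_le_one k (ha.comp σ.injective) c i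
    unfold exchange
    omega
  · have hrow : ∑ i, (exchange u k a σ c i : ℝ) = ∑ i, (u c i : ℝ) := by
      simp only [cast_exchange ha hmove, sum_sub_distrib, sum_add_distrib]
      simp only [← Nat.cast_sum, sum_moveCount_left]
      ring
    rw [← (hu c).2.1]
    exact_mod_cast hrow
  · have := (hu c).2.2 i hi
    have : moveCount k (a ∘ σ) c i = 0 := Nat.eq_zero_of_not_pos fun h => (hin i h).2 hi
    unfold exchange
    omega

theorem sum_exchange [Fintype κ] (ha : a.Injective)
    (hmove : ∀ t, IsMove J u (k t) (a t) (a (σ t))) : ∑ c, exchange u k a σ c = ∑ c, u c := by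
  funext i
  have hperm : #{t | a (σ t) = i} = #{t | a t = i} := by
    simp only [card_filter]
    exact Equiv.sum_comp σ (fun t => if a t = i then 1 else 0)
  have hcol : ∑ c, (exchange u k a σ c i : ℝ) = ∑ c, (u c i : ℝ) := by
    simp only [cast_exchange ha hmove, sum_sub_distrib, sum_add_distrib]
    simp only [← Nat.cast_sum, sum_moveCount_right, Function.comp_apply, hperm]
    ring
  simp only [Finset.sum_apply]
  exact_mod_cast hcol

theorem profit_exchange [Fintype κ] [Fintype α] (ρ : κ → α → ℝ) (ha : a.Injective)
    (hmove : ∀ t, IsMove J u (k t) (a t) (a (σ t))) :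
    profit ρ (exchange u k a σ) = profit ρ u + ∑ t, (ρ (k t) (a (σ t)) - ρ (k t) (a t)) := by
  simp only [profit, cast_exchange ha hmove, mul_sub, mul_add, sum_sub_distrib, sum_add_distrib,
    sum_sum_mul_moveCount, Function.comp_apply]
  ring

theorem cycle_nonneg_of_isMaxOn [Fintype κ] [Fintype α] {R : κ → ℕ} {N : α → ℕ}
    {ρ : κ → α → ℝ} (hu : u ∈ decompositions R J N)
    (hmax : IsMaxOn (profit ρ) (decompositions R J N) u) (ha : a.Injective)
    (hmove : ∀ t, IsMove J u (k t) (a t) (a (σ t))) :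
    0 ≤ ∑ t, (ρ (k t) (a t) - ρ (k t) (a (σ t))) := by
  have := isMaxOn_iff.mp hmax _
    ⟨isChoice_exchange hu.1 ha hmove, (sum_exchange ha hmove).trans hu.2⟩
  rw [profit_exchange ρ ha hmove] at this
  simp only [sum_sub_distrib] at this ⊢
  linarith

end Exchange

theorem exists_prices {κ α : Type*} [Fintype κ] [Fintype α] {R : κ → ℕ} {J : κ → Set α}
    {N : α → ℕ} (ρ : κ → α → ℝ) (hN : (decompositions R J N).Nonempty) :
    ∃ y : α → ℝ, ∃ u ∈ decompositions R J N, ∀ c v, IsChoice (R c) (J c) v →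
      ∑ i, (ρ c i + y i) * v i ≤ ∑ i, (ρ c i + y i) * u c i := by
  classical
  have hfin : (decompositions R J N).Finite :=
    (Set.finite_Iic 1).subset fun u hu c i => (hu.1 c).1 i
  obtain ⟨u, hu, hmax⟩ := Set.exists_max_image _ (profit ρ) hfin hN
  let w i j := ⨅ c : {c // IsMove J u c i j}, ρ c i - ρ c j
  obtain ⟨y, hy⟩ := exists_potential_of_forall_cycle_nonneg w (fun i j => ∃ c, IsMove J u c i j)
    fun m a ha hE => by
      have hk : ∀ t, ∃ c : {c // IsMove J u c (a t) (a (finRotate m t))},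
          ρ c (a t) - ρ c (a (finRotate m t)) = w (a t) (a (finRotate m t)) := fun t =>
        have : Nonempty {c // IsMove J u c (a t) (a (finRotate m t))} := nonempty_subtype.mpr (hE t)
        exists_eq_ciInf_of_finite
      choose k hk using hk
      simpa only [hk] using
        cycle_nonneg_of_isMaxOn hu (isMaxOn_iff.mpr hmax) ha (k := fun t => k t) fun t => (k t).2
  refine ⟨y, u, hu, fun c v hv => (hu.1 c).sum_mul_le hv _ fun i j hi hj hJ => ?_⟩
  have hmove : IsMove J u c i j := ⟨hi, hj, hJ⟩
  have := hy i j ⟨c, hmove⟩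
  have : w i j ≤ ρ c i - ρ c j :=
    ciInf_le (Set.finite_range fun c : {c // IsMove J u c i j} => ρ c i - ρ c j).bddBelow
      ⟨c, hmove⟩
  linarith

theorem stmt_11_general (n K : ℕ) (R : Fin K → ℕ)
    (J : Fin K → Set (Fin n)) (ρ : Fin K → Fin n → ℝ)
    (F : Fin K → Set (Fin n → ℕ))
    (hF : ∀ k, F k = {u : Fin n → ℕ |
      (∀ i, u i ≤ 1) ∧ (∑ i, u i) = R k ∧ ∀ i ∈ J k, u i = 0})
    (f : Fin n → ℕ → ℝ) (Ncap : Fin n → ℕ)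
    (B : Set (Fin n → ℕ))
    (hB : B = {N : Fin n → ℕ |
      (∃ u : Fin K → Fin n → ℕ, (∀ k, u k ∈ F k) ∧ (∑ k, u k) = N)
      ∧ ∀ i, N i ≤ Ncap i})
    (hBne : B.Nonempty) :
    ∃ m : ℝ,
      IsGreatest {v : ℝ | ∃ (y : Fin n → ℝ) (u : Fin K → Fin n → ℕ),
          (∀ k, u k ∈ F k ∧ ∀ w ∈ F k,
            ∑ i, (ρ k i + y i) * (w i : ℝ) ≤ ∑ i, (ρ k i + y i) * (u k i : ℝ))
          ∧ (∀ i, (∑ k, u k i) ≤ Ncap i)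
          ∧ v = ∑ i, f i (∑ k, u k i)} m
      ∧ IsGreatest ((fun N : Fin n → ℕ => ∑ i, f i (N i)) '' B) m := by
  have hF' : ∀ k u, u ∈ F k ↔ IsChoice (R k) (J k) u := fun k u => by rw [hF]; rfl
  have hBfin : B.Finite := (Set.finite_Iic Ncap).subset fun N hN => (hB ▸ hN).2
  obtain ⟨N, hNB, hNmax⟩ := Set.exists_max_image B (fun N => ∑ i, f i (N i)) hBfin hBne
  obtain ⟨⟨u₀, hu₀, hsum₀⟩, hcap⟩ := hB ▸ hNB
  obtain ⟨y, u, ⟨hu, hsum⟩, hopt⟩ :=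
    exists_prices ρ ⟨u₀, fun k => (hF' k _).1 (hu₀ k), hsum₀⟩
  have hsum' : ∀ i, ∑ k, u k i = N i := fun i => by rw [← hsum, Finset.sum_apply]
  refine ⟨_, ⟨⟨y, u, fun k => ⟨(hF' k _).2 (hu k), fun v hv => hopt k v ((hF' k v).1 hv)⟩,
    fun i => hsum' i ▸ hcap i, by simp only [hsum']⟩, ?_⟩, ⟨N, hNB, rfl⟩, ?_⟩
  · rintro _ ⟨y', u', hu', hcap', rfl⟩
    have hN' : ∑ k, u' k ∈ B := hB ▸ ⟨⟨u', fun k => (hu' k).1, rfl⟩, by simpa using hcap'⟩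
    simpa using hNmax _ hN'
  · rintro _ ⟨N', hN', rfl⟩
    exact hNmax N' hN'

/-- Decomposition theorem: the optimistic bilevel value (supremum of
`∑ᵢ fᵢ(∑ₖ uₖ(i))` over price vectors `y` and optimal responses `uₖ ∈ Fₖ`
respecting the capacities) equals the maximum of `∑ᵢ fᵢ(Nᵢ)` over the feasible
set `B = {N ∈ F₁ + ⋯ + F_K : Nᵢ ≤ Nᵢᶜ}`, and both are attained. -/
theorem stmt_11 (n K : ℕ) (R : Fin K → ℕ) (hR : ∀ k, R k ≤ n)
    (J : Fin K → Set (Fin n)) (ρ : Fin K → Fin n → ℝ)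
    (F : Fin K → Set (Fin n → ℕ))
    (hF : ∀ k, F k = {u : Fin n → ℕ |
      (∀ i, u i ≤ 1) ∧ (∑ i, u i) = R k ∧ ∀ i ∈ J k, u i = 0})
    (hne : ∀ k, (F k).Nonempty)
    (f : Fin n → ℕ → ℝ) (Ncap : Fin n → ℕ)
    (B : Set (Fin n → ℕ))
    (hB : B = {N : Fin n → ℕ |
      (∃ u : Fin K → Fin n → ℕ, (∀ k, u k ∈ F k) ∧ (∑ k, u k) = N)
      ∧ ∀ i, N i ≤ Ncap i})
    (hBne : B.Nonempty) :
    ∃ m : ℝ,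
      IsGreatest {v : ℝ | ∃ (y : Fin n → ℝ) (u : Fin K → Fin n → ℕ),
          (∀ k, u k ∈ F k ∧ ∀ w ∈ F k,
            ∑ i, (ρ k i + y i) * (w i : ℝ) ≤ ∑ i, (ρ k i + y i) * (u k i : ℝ))
          ∧ (∀ i, (∑ k, u k i) ≤ Ncap i)
          ∧ v = ∑ i, f i (∑ k, u k i)} m
      ∧ IsGreatest ((fun N : Fin n → ℕ => ∑ i, f i (N i)) '' B) m :=
  stmt_11_general n K R J ρ F hF f Ncap B hB hBne
end

section
/- Let u_k* ∈ F_k (k = 1,…,K) be an optimal decomposition of N = ∑_{k=1}^K u_k*, i.e. ∑_{k=1}^K ⟨ρ_k, u_k*⟩ ≥ ∑_{k=1}^K ⟨ρ_k, v_k⟩ for all v_k ∈ F_k with ∑_{k=1}^K v_k = N. Then the associated exchange graph has no negative cycle: for every r ≥ 1, every sequence of indices γ_0, γ_1, …, γ_r ∈ {1,…,n} with γ_r = γ_0, and every sequence l_0, …, l_{r−1} ∈ {1,…,K} such that for each u ∈ {0,…,r−1} one has u_{l_u}*(γ_u) = 1, u_{l_u}*(γ_{u+1}) = 0 and γ_{u+1}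 ∉ J_{l_u}, the total weight satisfies ∑_{u=0}^{r−1} (ρ_{l_u}(γ_u) − ρ_{l_u}(γ_{u+1})) ≥ 0. -/
/-!
On a cycle with pairwise distinct vertices, let every customer `l t` trade item `γ t` for
`γ (t + 1)`. Each item is given up once and taken once, so the aggregate `∑ k, u k` is
unchanged, and the edge conditions together with distinctness keep every `u k` a 0/1 vector
of the same size avoiding `J k`; the objective drops by exactly the cycle weight, so optimality
makes that weight nonnegative. A closed walk with a repeated vertex splits at the repetition
into two shorter closed walks whose weights add up to its own, and strong induction on the
length reduces everything to the simple case.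
-/

open Finset

section ClosedWalk

variable {α β : Type*} (Q : β → α → α → Prop) (w : β → α → α → ℝ)

def IsClosedWalk (r : ℕ) (γ : ℕ → α) (l : ℕ → β) : Prop :=
  γ r = γ 0 ∧ ∀ t < r, Q (l t) (γ t) (γ (t + 1))

def walkWeight (r : ℕ) (γ : ℕ → α) (l : ℕ → β) : ℝ :=
  ∑ t ∈ range r, w (l t) (γ t) (γ (t + 1))

def skipBlock (a d t : ℕ) : ℕ := if t < a then t else t + d

variable {Q} {r : ℕ} {γ : ℕ → α} {l : ℕ → β}

lemma skipBlock_succ {a d : ℕ} (h : γ (a + d) = γ a) (t : ℕ) :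
    γ (skipBlock a d (t + 1)) = γ (skipBlock a d t + 1) := by
  unfold skipBlock
  rcases lt_trichotomy (t + 1) a with ht | ht | ht
  · rw [if_pos ht, if_pos (by omega)]
  · subst ht
    rw [if_neg (by omega), if_pos (by omega), h]
  · rw [if_neg (by omega), if_neg (by omega), Nat.add_right_comm]

lemma IsClosedWalk.inner {a d m : ℕ} (hw : IsClosedWalk Q (a + d + m) γ l)
    (h : γ (a + d) = γ a) : IsClosedWalk Q d (fun t => γ (a + t)) (fun t => l (a + t)) :=
  ⟨h, fun t ht => by simpa only [add_assoc] using hw.2 (a + t) (by omega)⟩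

lemma IsClosedWalk.outer {a d m : ℕ} (hw : IsClosedWalk Q (a + d + m) γ l)
    (h : γ (a + d) = γ a) :
    IsClosedWalk Q (a + m) (γ ∘ skipBlock a d) (l ∘ skipBlock a d) := by
  refine ⟨?_, fun t ht => ?_⟩
  · have hstart : γ (skipBlock a d 0) = γ 0 := by
      unfold skipBlock; split_ifs with ha
      · rfl
      · obtain rfl : a = 0 := by omega
        simpa using h
    simp only [Function.comp, hstart]
    simp only [skipBlock, if_neg (show ¬ a + m < a by omega)]
    rw [show a + m + d = a + d + m by omega, hw.1]
  · simp only [Function.comp, skipBlock_succ h]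
    exact hw.2 _ (by unfold skipBlock; split_ifs <;> omega)

lemma walkWeight_split {a d m : ℕ} (h : γ (a + d) = γ a) :
    walkWeight w (a + d + m) γ l = walkWeight w d (fun t => γ (a + t)) (fun t => l (a + t))
      + walkWeight w (a + m) (γ ∘ skipBlock a d) (l ∘ skipBlock a d) := by
  set E : ℕ → ℝ := fun j => w (l j) (γ j) (γ (j + 1))
  have hlow : ∀ t ∈ range a, skipBlock a d t = t := fun t ht => if_pos (mem_range.1 ht)
  have hhigh : ∀ t, skipBlock a d (a + t) = a + d + t := fun t => by
    simp only [skipBlock, if_neg (show ¬ a + t < a by omega)]; ring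
  have houter : walkWeight w (a + m) (γ ∘ skipBlock a d) (l ∘ skipBlock a d)
      = ∑ t ∈ range (a + m), E (skipBlock a d t) := by
    simp only [walkWeight, Function.comp, skipBlock_succ h, E]
  rw [houter, walkWeight, walkWeight, sum_range_add, sum_range_add, sum_range_add,
    sum_congr rfl fun t ht => congrArg E (hlow t ht)]
  simp only [hhigh, E, add_assoc]
  ring

theorem walkWeight_nonneg_of_simple
    (hsimple : ∀ r γ l, IsClosedWalk Q r γ l → Set.InjOn γ (range r) → 0 ≤ walkWeight w r γ l)
    (hw : IsClosedWalk Q r γ l) : 0 ≤ walkWeight w r γ l := by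
  induction r using Nat.strong_induction_on generalizing γ l with
  | _ r ih =>
  by_cases hinj : Set.InjOn γ (range r)
  · exact hsimple r γ l hw hinj
  obtain ⟨a, b, hab, hbr, hγ⟩ : ∃ a b, a < b ∧ b < r ∧ γ b = γ a := by
    simp only [Set.InjOn, not_forall] at hinj
    obtain ⟨x, hx, y, hy, hxy, hne⟩ := hinj
    simp only [coe_range, Set.mem_Iio] at hx hy
    rcases lt_or_gt_of_ne hne with h | h
    exacts [⟨x, y, h, hy, hxy.symm⟩, ⟨y, x, h, hx, hxy⟩]
  obtain ⟨d, rfl⟩ := Nat.exists_eq_add_of_le hab.le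
  obtain ⟨m, rfl⟩ := Nat.exists_eq_add_of_le hbr.le
  rw [walkWeight_split w hγ]
  exact add_nonneg (ih _ (by omega) (hw.inner hγ)) (ih _ (by omega) (hw.outer hγ))

lemma injOn_range_succ (hγ : γ r = γ 0) (hinj : Set.InjOn γ (range r)) :
    Set.InjOn (fun t => γ (t + 1)) (range r) := by
  let next t := if t + 1 = r then 0 else t + 1
  have hnext : ∀ t, γ (t + 1) = γ (next t) := fun t => by
    simp only [next]; split_ifs with h
    · rw [h, hγ]
    · rfl
  have hmem : ∀ t ∈ range r, next t ∈ range r := fun t ht => by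
    simp only [next, mem_range] at ht ⊢; split_ifs <;> omega
  intro a ha b hb hab
  have := hinj (hmem a ha) (hmem b hb) (by simpa only [hnext] using hab)
  simp only [next] at this
  simp only [coe_range, Set.mem_Iio] at ha hb
  split_ifs at this <;> omega

end ClosedWalk

lemma Finset.card_filter_and_eq_le_one {σ ι : Type*} [DecidableEq ι] {s : Finset σ} {g : σ → ι}
    (hg : Set.InjOn g s) (p : σ → Prop) [DecidablePred p] (i : ι) :
    #{t ∈ s | p t ∧ g t = i} ≤ 1 :=
  card_le_one.2 fun a ha b hb => by
    simp only [mem_filter] at ha hb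
    exact hg ha.1 hb.1 (ha.2.2.trans hb.2.2.symm)

section Exchange

variable {ι κ : Type*} [DecidableEq ι] [DecidableEq κ] {u ρ : κ → ι → ℝ} {r : ℕ} {γ : ℕ → ι}
  {l : ℕ → κ}

def IsExchangeEdge (u : κ → ι → ℝ) (J : κ → Set ι) (k : κ) (α β : ι) : Prop :=
  u k α = 1 ∧ u k β = 0 ∧ β ∉ J k

def cycleExchange (u : κ → ι → ℝ) (r : ℕ) (γ : ℕ → ι) (l : ℕ → κ) : κ → ι → ℝ :=
  u + ∑ t ∈ range r, Pi.single (l t) (Pi.single (γ (t + 1)) 1 - Pi.single (γ t) 1)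

lemma cycleExchange_apply (k : κ) (i : ι) :
    cycleExchange u r γ l k i
      = u k i + #{t ∈ range r | l t = k ∧ γ (t + 1) = i} - #{t ∈ range r | l t = k ∧ γ t = i} := by
  simp only [cycleExchange, Pi.add_apply, Finset.sum_apply, card_filter, Nat.cast_sum,
    add_sub_assoc, ← sum_sub_distrib]
  congr 1
  refine sum_congr rfl fun t _ => ?_
  by_cases hk : l t = k
  · subst hk; simp [Pi.single_apply, eq_comm]
  · simp [hk, Ne.symm hk]

lemma sum_cycleExchange [Fintype κ] (hγ : γ r = γ 0) :
    ∑ k, cycleExchange u r γ l k = ∑ k, u k := by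
  simp only [cycleExchange, Pi.add_apply, sum_add_distrib, Finset.sum_apply]
  rw [sum_comm]
  simp only [Fintype.sum_pi_single', add_eq_left]
  exact (sum_range_sub (fun t => (Pi.single (γ t) 1 : ι → ℝ)) r).trans (by rw [hγ, sub_self])

variable [Fintype ι]

def feasibleSet (R : ℕ) (J : Set ι) : Set (ι → ℝ) :=
  {u | (∀ i, u i = 0 ∨ u i = 1) ∧ ∑ i, u i = R ∧ ∀ i ∈ J, u i = 0}

lemma sum_cycleExchange_apply (k : κ) : ∑ i, cycleExchange u r γ l k i = ∑ i, u k i := by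
  simp only [cycleExchange, Pi.add_apply, Finset.sum_apply, sum_add_distrib, add_eq_left]
  rw [sum_comm]
  refine sum_eq_zero fun t _ => ?_
  rw [Pi.single_apply]
  split_ifs <;> simp [sum_sub_distrib]

lemma cycleExchange_mem_feasibleSet {R : κ → ℕ} {J : κ → Set ι}
    (hu : ∀ k, u k ∈ feasibleSet (R k) (J k)) (hw : IsClosedWalk (IsExchangeEdge u J) r γ l)
    (hinj : Set.InjOn γ (range r)) (k : κ) :
    cycleExchange u r γ l k ∈ feasibleSet (R k) (J k) := by
  obtain ⟨hu01, husum, huJ⟩ := hu k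
  have hin : ∀ i, #{t ∈ range r | l t = k ∧ γ (t + 1) = i} ≠ 0 → u k i = 0 ∧ i ∉ J k := by
    intro i hpos
    obtain ⟨t, ht⟩ := card_ne_zero.1 hpos
    rw [mem_filter, mem_range] at ht
    obtain ⟨ht, rfl, rfl⟩ := ht
    exact (hw.2 t ht).2
  have hout : ∀ i, #{t ∈ range r | l t = k ∧ γ t = i} ≠ 0 → u k i = 1 := by
    intro i hpos
    obtain ⟨t, ht⟩ := card_ne_zero.1 hpos
    rw [mem_filter, mem_range] at ht
    obtain ⟨ht, rfl, rfl⟩ := ht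
    exact (hw.2 t ht).1
  refine ⟨fun i => ?_, (sum_cycleExchange_apply k).trans husum, fun i hi => ?_⟩
  · rw [cycleExchange_apply]
    have h1 := card_filter_and_eq_le_one (injOn_range_succ hw.1 hinj) (l · = k) i
    have h2 := card_filter_and_eq_le_one hinj (l · = k) i
    rcases Nat.le_one_iff_eq_zero_or_eq_one.1 h1 with ha | ha <;>
      rcases Nat.le_one_iff_eq_zero_or_eq_one.1 h2 with hb | hb
    · simpa [ha, hb] using hu01 i
    · simp [ha, hb, hout i (by omega)]
    · simp [ha, hb, (hin i (by omega)).1]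
    · have := (hin i (by omega)).1
      rw [hout i (by omega)] at this
      norm_num at this
  · have h1 : #{t ∈ range r | l t = k ∧ γ (t + 1) = i} = 0 := by
      by_contra h
      exact (hin i h).2 hi
    have h2 : #{t ∈ range r | l t = k ∧ γ t = i} = 0 := by
      by_contra h
      simpa [huJ i hi] using hout i h
    simp [cycleExchange_apply, h1, h2, huJ i hi]

variable [Fintype κ]

def totalValue (ρ v : κ → ι → ℝ) : ℝ := ∑ k, ρ k ⬝ᵥ v k

lemma totalValue_cycleExchange :
    totalValue ρ (cycleExchange u r γ l)
      = totalValue ρ u - walkWeight (fun k α β => ρ k α - ρ k β) r γ l := by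
  simp only [totalValue, cycleExchange, walkWeight, Pi.add_apply, dotProduct_add,
    sum_add_distrib, Finset.sum_apply, dotProduct_sum]
  rw [sum_comm]
  simp [Pi.single_apply, apply_ite, dotProduct_sub]
  ring

theorem walkWeight_nonneg_of_optimal {R : κ → ℕ} {J : κ → Set ι}
    (hu : ∀ k, u k ∈ feasibleSet (R k) (J k))
    (hopt : ∀ v : κ → ι → ℝ, (∀ k, v k ∈ feasibleSet (R k) (J k)) → ∑ k, v k = ∑ k, u k →
      totalValue ρ v ≤ totalValue ρ u)
    (hw : IsClosedWalk (IsExchangeEdge u J) r γ l) :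
    0 ≤ walkWeight (fun k α β => ρ k α - ρ k β) r γ l := by
  refine walkWeight_nonneg_of_simple _ (fun r γ l hw hinj => ?_) hw
  have := hopt _ (cycleExchange_mem_feasibleSet hu hw hinj) (sum_cycleExchange hw.1)
  rw [totalValue_cycleExchange] at this
  linarith

end Exchange

theorem stmt_14_general (n K : ℕ) (R : Fin K → ℕ)
    (J : Fin K → Set (Fin n)) (ρ : Fin K → Fin n → ℝ)
    (F : Fin K → Set (Fin n → ℝ))
    (hF : ∀ k, F k = {u : Fin n → ℝ |
      (∀ i, u i = 0 ∨ u i = 1) ∧ (∑ i, u i) = (R k : ℝ) ∧ ∀ i ∈ J k, u i = 0})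
    (ustar : Fin K → Fin n → ℝ) (hu : ∀ k, ustar k ∈ F k)
    (hopt : ∀ v : Fin K → Fin n → ℝ, (∀ k, v k ∈ F k) →
      (∑ k, v k) = (∑ k, ustar k) →
      ∑ k, ∑ i, ρ k i * v k i ≤ ∑ k, ∑ i, ρ k i * ustar k i)
    (r : ℕ) (γ : ℕ → Fin n) (hcycle : γ r = γ 0)
    (l : ℕ → Fin K)
    (hl : ∀ u < r, ustar (l u) (γ u) = 1 ∧ ustar (l u) (γ (u + 1)) = 0
      ∧ γ (u + 1) ∉ J (l u)) :
    0 ≤ ∑ u ∈ Finset.range r, (ρ (l u) (γ u) - ρ (l u) (γ (u + 1))) := by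
  obtain rfl : F = fun k => feasibleSet (R k) (J k) := funext hF
  exact walkWeight_nonneg_of_optimal hu hopt ⟨hcycle, hl⟩

/-- If `(uₖ*)` is an optimal decomposition of `N = ∑ₖ uₖ*`, then the exchange
graph has no negative cycle: for every cycle `γ₀, …, γ_r = γ₀` with edge
labels `l₀, …, l_{r-1}` satisfying `u_{lᵤ}*(γᵤ) = 1`, `u_{lᵤ}*(γᵤ₊₁) = 0` and
`γᵤ₊₁ ∉ J_{lᵤ}`, the total weight `∑ᵤ (ρ_{lᵤ}(γᵤ) - ρ_{lᵤ}(γᵤ₊₁))` is ≥ 0. -/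
theorem stmt_14 (n K : ℕ) (R : Fin K → ℕ) (hR : ∀ k, R k ≤ n)
    (J : Fin K → Set (Fin n)) (ρ : Fin K → Fin n → ℝ)
    (F : Fin K → Set (Fin n → ℝ))
    (hF : ∀ k, F k = {u : Fin n → ℝ |
      (∀ i, u i = 0 ∨ u i = 1) ∧ (∑ i, u i) = (R k : ℝ) ∧ ∀ i ∈ J k, u i = 0})
    (ustar : Fin K → Fin n → ℝ) (hu : ∀ k, ustar k ∈ F k)
    (hopt : ∀ v : Fin K → Fin n → ℝ, (∀ k, v k ∈ F k) →
      (∑ k, v k) = (∑ k, ustar k) →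
      ∑ k, ∑ i, ρ k i * v k i ≤ ∑ k, ∑ i, ρ k i * ustar k i)
    (r : ℕ) (hr : 1 ≤ r) (γ : ℕ → Fin n) (hcycle : γ r = γ 0)
    (l : ℕ → Fin K)
    (hl : ∀ u < r, ustar (l u) (γ u) = 1 ∧ ustar (l u) (γ (u + 1)) = 0
      ∧ γ (u + 1) ∉ J (l u)) :
    0 ≤ ∑ u ∈ Finset.range r, (ρ (l u) (γ u) - ρ (l u) (γ (u + 1))) :=
  stmt_14_general n K R J ρ F hF ustar hu hopt r γ hcycle l hl
end
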